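/- If H ∈ 𝔄 is reflection invariant, Θ(H) = H, then the partition sum Z_H = Tr(e^{−H}) is real. -/

import Mathlib

open ComplexOrder

noncomputable section

/-- The setting of the paper: a finite set `Λ` with a fixed-point free involution `ϑ`
exchanging `Λp` and its complement, the Clifford algebra (algebra of Majoranas) `carrier`
with self-adjoint generators `c i`, the global gauge automorphism `gauge`, the antilinear
reflection `*`-automorphism `Θ`, a square root `ζ` of `-1`, the twisted product `twist`,
a choice `P` of orderings of the subsets of `Λp` (giving the bases
`{C J : J ∈ P}` of `𝔄₊` and `{Θ(C J) ∘ C J' : J, J' ∈ P}` of `𝔄`),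
and the tracial state `Tr` picking out the coefficient of `1` in the basis expansion. -/
structure MajoranaSetting where
  Λ : Type
  [fintypeΛ : Fintype Λ]
  [deceqΛ : DecidableEq Λ]
  ϑ : Λ → Λ
  ϑ_invol : Function.Involutive ϑ
  ϑ_fixfree : ∀ i, ϑ i ≠ i
  Λp : Finset Λ
  ϑ_exch : ∀ i, i ∈ Λp ↔ ϑ i ∉ Λp
  carrier : Type
  [nring : NormedRing carrier]
  [nalg : NormedAlgebra ℂ carrier]
  [cmpl : CompleteSpace carrier]
  [starring : StarRing carrier]
  [starmod : StarModule ℂ carrier]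
  c : Λ → carrier
  c_star : ∀ i, star (c i) = c i
  clifford : ∀ i j, c i * c j + c j * c i = if i = j then (2 : carrier) else 0
  gauge : carrier ≃ₐ[ℂ] carrier
  gauge_c : ∀ i, gauge (c i) = - c i
  Θ : carrier → carrier
  Θ_add : ∀ x y, Θ (x + y) = Θ x + Θ y
  Θ_smul : ∀ (z : ℂ) (x), Θ (z • x) = (starRingEnd ℂ z) • Θ x
  Θ_mul : ∀ x y, Θ (x * y) = Θ x * Θ y
  Θ_star : ∀ x, Θ (star x) = star (Θ x)
  Θ_invol : ∀ x, Θ (Θ x) = x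
  Θ_c : ∀ i, Θ (c i) = c (ϑ i)
  ζ : ℂ
  ζ_sq : ζ ^ 2 = -1
  twist : carrier → carrier → carrier
  twist_add_left : ∀ x x' y, twist (x + x') y = twist x y + twist x' y
  twist_add_right : ∀ x y y', twist x (y + y') = twist x y + twist x y'
  twist_smul_left : ∀ (z : ℂ) (x y), twist (z • x) y = z • twist x y
  twist_smul_right : ∀ (z : ℂ) (x y), twist x (z • y) = z • twist x y
  twist_spec : ∀ (Am Ap Bm Bp : carrier) (a b a' b' : ℕ),
    a ≤ 1 → b ≤ 1 → a' ≤ 1 → b' ≤ 1 →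
    Am ∈ Algebra.adjoin ℂ (c '' {i | i ∉ Λp}) →
    Ap ∈ Algebra.adjoin ℂ (c '' {i | i ∈ Λp}) →
    Bm ∈ Algebra.adjoin ℂ (c '' {i | i ∉ Λp}) →
    Bp ∈ Algebra.adjoin ℂ (c '' {i | i ∈ Λp}) →
    gauge Am = ((-1 : ℂ) ^ a) • Am →
    gauge Ap = ((-1 : ℂ) ^ b) • Ap →
    gauge Bm = ((-1 : ℂ) ^ a') • Bm →
    gauge Bp = ((-1 : ℂ) ^ b') • Bp →
    twist (Am * Ap) (Bm * Bp)
      = ζ ^ ((a * b' : ℤ) - (b * a' : ℤ)) • (Am * Ap * (Bm * Bp))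
  P : Finset (List Λ)
  P_nodup : ∀ J ∈ P, J.Nodup
  P_sub : ∀ J ∈ P, ∀ i ∈ J, i ∈ Λp
  P_unique : ∀ s : Finset Λ, s ⊆ Λp → ∃! J, J ∈ P ∧ J.toFinset = s
  Tr : carrier →ₗ[ℂ] ℂ
  Tr_basis : ∀ J ∈ P, ∀ J' ∈ P,
    Tr (twist (Θ ((J.map c).prod)) ((J'.map c).prod))
      = if J = [] ∧ J' = [] then 1 else 0
  basis_indep : LinearIndependent ℂ
    (fun p : {J // J ∈ P} × {J // J ∈ P} =>
      twist (Θ ((p.1.1.map c).prod)) ((p.2.1.map c).prod))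
  basis_span : ∀ x : carrier, x ∈ Submodule.span ℂ
    (Set.range fun p : {J // J ∈ P} × {J // J ∈ P} =>
      twist (Θ ((p.1.1.map c).prod)) ((p.2.1.map c).prod))
  plus_span : ∀ x ∈ Algebra.adjoin ℂ (c '' {i | i ∈ Λp}),
    x ∈ Submodule.span ℂ (Set.range fun J : {J // J ∈ P} => ((J.1.map c).prod))

attribute [instance] MajoranaSetting.fintypeΛ MajoranaSetting.deceqΛ
  MajoranaSetting.nring MajoranaSetting.nalg MajoranaSetting.cmpl
  MajoranaSetting.starring MajoranaSetting.starmod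

namespace MajoranaSetting

variable (S : MajoranaSetting)

/-- The subalgebra `𝔄₊` generated by the Majoranas on the `+` side. -/
def Aplus : Subalgebra ℂ S.carrier := Algebra.adjoin ℂ (S.c '' {i | i ∈ S.Λp})

/-- The subalgebra `𝔄₋` generated by the Majoranas on the `-` side. -/
def Aminus : Subalgebra ℂ S.carrier := Algebra.adjoin ℂ (S.c '' {i | i ∉ S.Λp})

/-- The monomial `C_𝔍 = c_{i₁} ⋯ c_{i_k}`. -/
def C (J : List S.Λ) : S.carrier := (J.map S.c).prod

/-- `q_𝔍 = (-1)^{k(k-1)/2}`. -/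
def q (J : List S.Λ) : ℂ := (-1 : ℂ) ^ (J.length * (J.length - 1) / 2)

/-- `s_𝔍 = ζ^{k(k-1)/2}`. -/
def sgn (J : List S.Λ) : ℂ := S.ζ ^ (J.length * (J.length - 1) / 2)

/-- The exponential `e^x` in the (finite-dimensional) algebra `𝔄`. -/
def expm (x : S.carrier) : S.carrier := NormedSpace.exp x

/-- The Hamiltonian `H = -∑_{𝔍,𝔍' ∈ 𝒫₊} J_{𝔍𝔍'} Θ(C_𝔍) ∘ C_𝔍'`
determined by coupling constants `Jc`. -/
def Ham (Jc : List S.Λ → List S.Λ → ℂ) : S.carrier :=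
  - ∑ J ∈ S.P, ∑ J' ∈ S.P, Jc J J' • S.twist (S.Θ (S.C J)) (S.C J')

/-- The index type of the basis `{C J : J ∈ 𝒫₊}`. -/
abbrev PIdx := {J : List S.Λ // J ∈ S.P}

/-- The index type `𝒫₊ - {∅}` of couplings across the reflection plane. -/
abbrev PIdx0 := {p : S.PIdx // p.1 ≠ []}

/-- The full matrix of coupling constants. -/
def Jmat (Jc : List S.Λ → List S.Λ → ℂ) : Matrix S.PIdx S.PIdx ℂ :=
  Matrix.of fun p q => Jc p.1 q.1

/-- The matrix `J⁰` of coupling constants across the reflection plane. -/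
def Jmat0 (Jc : List S.Λ → List S.Λ → ℂ) : Matrix S.PIdx0 S.PIdx0 ℂ :=
  Matrix.of fun p q => Jc p.1.1 q.1.1

end MajoranaSetting

/-! The reflection `Θ` is a continuous (real-linear, finite-dimensional) ring automorphism, so it
commutes with the exponential series: `Θ (e^{-H}) = e^{-Θ H} = e^{-H}`. It therefore suffices that
`Tr ∘ Θ = conj ∘ Tr`, which is checked on the basis `Θ(C_𝔍) ∘ C_𝔍'`: `Θ` sends it to a multiple of
`Θ(C_𝔍') ∘ C_𝔍` (the Majoranas on the two sides of the plane anticommute), whose trace vanishes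
unless `𝔍 = 𝔍' = ∅`, where the basis element is `1`. -/

section Anticommute

variable {R : Type*} [Ring R]

theorem mul_list_prod_of_anticomm {x : R} {M : List R} (h : ∀ y ∈ M, x * y = -(y * x)) :
    x * M.prod = (-1) ^ M.length * (M.prod * x) := by
  induction M with
  | nil => simp
  | cons y M ih =>
    rw [List.prod_cons, ← mul_assoc, h y List.mem_cons_self, neg_mul, mul_assoc,
      ih fun z hz => h z (List.mem_cons_of_mem y hz),
      ((Commute.neg_one_right y).pow_right M.length).left_comm]
    simp [pow_succ, mul_assoc]

theorem list_prod_mul_list_prod_of_anticomm {L M : List R}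
    (h : ∀ x ∈ L, ∀ y ∈ M, x * y = -(y * x)) :
    L.prod * M.prod = (-1) ^ (L.length * M.length) * (M.prod * L.prod) := by
  induction L with
  | nil => simp
  | cons x L ih =>
    rw [List.prod_cons, mul_assoc, ih fun z hz => h z (List.mem_cons_of_mem x hz),
      ((Commute.neg_one_right x).pow_right _).left_comm, ← mul_assoc x,
      mul_list_prod_of_anticomm (h x List.mem_cons_self)]
    simp [add_mul, pow_add, mul_assoc]

end Anticommute

namespace MajoranaSetting

variable (S : MajoranaSetting)

theorem c_mul_c_of_ne {i j : S.Λ} (h : i ≠ j) : S.c i * S.c j = -(S.c j * S.c i) :=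
  eq_neg_of_add_eq_zero_left <| by rw [S.clifford, if_neg h]

theorem Θ_one : S.Θ 1 = 1 := by
  simpa [S.Θ_invol] using (S.Θ_mul 1 (S.Θ 1)).symm

def ΘRingHom : S.carrier →+* S.carrier :=
  RingHom.mk' ⟨⟨S.Θ, S.Θ_one⟩, S.Θ_mul⟩ S.Θ_add

theorem ΘRingHom_apply (x : S.carrier) : S.ΘRingHom x = S.Θ x := rfl

def ΘRealLinear : S.carrier →ₗ[ℝ] S.carrier where
  toFun := S.Θ
  map_add' := S.Θ_add
  map_smul' r x := by
    rw [← Complex.coe_smul, S.Θ_smul, Complex.conj_ofReal, RingHom.id_apply, Complex.coe_smul]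

instance : FiniteDimensional ℂ S.carrier :=
  Module.Finite.of_basis (Module.Basis.mk S.basis_indep fun x _ => S.basis_span x)

theorem continuous_Θ : Continuous S.Θ :=
  S.ΘRealLinear.continuous_of_finiteDimensional

theorem Θ_exp (x : S.carrier) : S.Θ (NormedSpace.exp x) = NormedSpace.exp (S.Θ x) :=
  letI : NormedAlgebra ℚ S.carrier := NormedAlgebra.restrictScalars ℚ ℂ S.carrier
  NormedSpace.map_exp S.ΘRingHom S.continuous_Θ x

theorem Θ_C (J : List S.Λ) : S.Θ (S.C J) = S.C (J.map S.ϑ) := by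
  change S.ΘRingHom (J.map S.c).prod = _
  rw [C, map_list_prod, List.map_map, List.map_map]
  exact congrArg _ (List.map_congr_left fun i _ => S.Θ_c i)

theorem gauge_C (J : List S.Λ) : S.gauge (S.C J) = ((-1 : ℂ) ^ J.length) • S.C J := by
  induction J with
  | nil => simp [C]
  | cons i J ih =>
    simp only [C, List.map_cons, List.prod_cons, List.length_cons] at *
    rw [map_mul, S.gauge_c, ih, mul_smul_comm, neg_mul, pow_succ', neg_one_mul, neg_smul,
      smul_neg]

theorem C_mem_adjoin {s : Set S.Λ} {J : List S.Λ} (h : ∀ i ∈ J, i ∈ s) :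
    S.C J ∈ Algebra.adjoin ℂ (S.c '' s) :=
  Subalgebra.list_prod_mem _ fun _ hx =>
    let ⟨i, hi, hx⟩ := List.mem_map.1 hx
    hx ▸ Algebra.subset_adjoin ⟨i, h i hi, rfl⟩

variable {S} {J J' : List S.Λ}

theorem twist_Θ_C_C (hJ : ∀ i ∈ J, i ∈ S.Λp) (hJ' : ∀ i ∈ J', i ∈ S.Λp) :
    S.twist (S.Θ (S.C J)) (S.C J')
      = S.ζ ^ ((J.length % 2 : ℤ) * (J'.length % 2 : ℤ)) • (S.Θ (S.C J) * S.C J') := by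
  have hΘJ : ∀ i ∈ J.map S.ϑ, i ∉ S.Λp := by
    simp only [List.mem_map]
    rintro _ ⟨j, hj, rfl⟩
    exact (S.ϑ_exch j).1 (hJ j hj)
  have parity (n : ℕ) : (-1 : ℂ) ^ n = (-1) ^ (n % 2) := neg_one_pow_eq_pow_mod_two n
  have h := S.twist_spec (S.Θ (S.C J)) 1 1 (S.C J') (J.length % 2) 0 0 (J'.length % 2)
    (Nat.le_of_lt_succ (Nat.mod_lt _ two_pos)) zero_le_one zero_le_one
    (Nat.le_of_lt_succ (Nat.mod_lt _ two_pos))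
    (S.Θ_C J ▸ S.C_mem_adjoin hΘJ) (one_mem _) (one_mem _) (S.C_mem_adjoin hJ')
    (by rw [S.Θ_C, S.gauge_C, List.length_map, parity]) (by simp) (by simp)
    (by rw [S.gauge_C, parity])
  simpa using h

theorem C_mul_Θ_C (hJ : ∀ i ∈ J, i ∈ S.Λp) (hJ' : ∀ i ∈ J', i ∈ S.Λp) :
    S.C J * S.Θ (S.C J') = ((-1 : ℂ) ^ (J.length * J'.length)) • (S.Θ (S.C J') * S.C J) := by
  have anticomm : ∀ x ∈ J.map S.c, ∀ y ∈ (J'.map S.ϑ).map S.c, x * y = -(y * x) := by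
    simp only [List.map_map, List.mem_map, Function.comp_apply]
    rintro _ ⟨i, hi, rfl⟩ _ ⟨j, hj, rfl⟩
    refine S.c_mul_c_of_ne fun hij => (S.ϑ_exch j).1 (hJ' j hj) ?_
    exact hij ▸ hJ i hi
  rw [S.Θ_C, C, C, list_prod_mul_list_prod_of_anticomm anticomm]
  simp [Algebra.smul_def]

theorem Θ_twist_Θ_C_C (hJ : ∀ i ∈ J, i ∈ S.Λp) (hJ' : ∀ i ∈ J', i ∈ S.Λp) :
    ∃ z : ℂ, S.Θ (S.twist (S.Θ (S.C J)) (S.C J')) = z • S.twist (S.Θ (S.C J')) (S.C J) := by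
  have hζ : S.ζ ≠ 0 := fun h => by simpa [h] using S.ζ_sq
  set u := S.ζ ^ ((J'.length % 2 : ℤ) * (J.length % 2 : ℤ))
  refine ⟨starRingEnd ℂ (S.ζ ^ ((J.length % 2 : ℤ) * (J'.length % 2 : ℤ)))
    * (-1) ^ (J.length * J'.length) * u⁻¹, ?_⟩
  rw [twist_Θ_C_C hJ hJ', twist_Θ_C_C hJ' hJ, S.Θ_smul, S.Θ_mul, S.Θ_invol, C_mul_Θ_C hJ hJ',
    smul_smul, smul_smul, inv_mul_cancel_right₀ (zpow_ne_zero _ hζ)]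

theorem twist_one_one : S.twist 1 1 = 1 := by
  simpa [C, S.Θ_one] using twist_Θ_C_C (S := S) (J := []) (J' := []) (by simp) (by simp)

theorem Tr_Θ_twist_Θ_C_C (hJ : J ∈ S.P) (hJ' : J' ∈ S.P) :
    S.Tr (S.Θ (S.twist (S.Θ (S.C J)) (S.C J')))
      = starRingEnd ℂ (S.Tr (S.twist (S.Θ (S.C J)) (S.C J'))) := by
  by_cases hempty : J = [] ∧ J' = []
  · obtain ⟨rfl, rfl⟩ := hempty
    have h := S.Tr_basis [] hJ [] hJ'
    simp only [List.map_nil, List.prod_nil, S.Θ_one, twist_one_one, and_self, if_true] at h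
    simp only [C, List.map_nil, List.prod_nil, S.Θ_one, twist_one_one, h, map_one]
  · obtain ⟨z, hz⟩ := Θ_twist_Θ_C_C (S.P_sub J hJ) (S.P_sub J' hJ')
    have h := S.Tr_basis J hJ J' hJ'
    have h' := S.Tr_basis J' hJ' J hJ
    rw [if_neg hempty] at h
    rw [if_neg fun h => hempty h.symm] at h'
    rw [hz, map_smul]
    simp only [C] at h h' ⊢
    rw [h, h', smul_zero, map_zero]

theorem Tr_Θ (x : S.carrier) : S.Tr (S.Θ x) = starRingEnd ℂ (S.Tr x) := by
  induction S.basis_span x using Submodule.span_induction with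
  | mem _ hb =>
    obtain ⟨⟨⟨J, hJ⟩, ⟨J', hJ'⟩⟩, rfl⟩ := hb
    exact Tr_Θ_twist_Θ_C_C hJ hJ'
  | zero => rw [← S.ΘRingHom_apply, map_zero, map_zero, map_zero]
  | add a b _ _ ha hb => rw [S.Θ_add, map_add, ha, hb, map_add, map_add]
  | smul z a _ h => rw [S.Θ_smul, map_smul, h, map_smul, smul_eq_mul, smul_eq_mul, map_mul]

end MajoranaSetting

/-- if `Θ(H) = H` then the partition sum `Z_H = Tr(e^{-H})` is real. -/
theorem partition_sum_real (S : MajoranaSetting) (H : S.carrier) (hH : S.Θ H = H) :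
    starRingEnd ℂ (S.Tr (S.expm (-H))) = S.Tr (S.expm (-H)) := by
  have hΘ : S.Θ (S.expm (-H)) = S.expm (-H) := by
    rw [MajoranaSetting.expm, S.Θ_exp, ← S.ΘRingHom_apply, map_neg, S.ΘRingHom_apply, hH]
  rw [← S.Tr_Θ, hΘ]
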